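/- arXiv:1511.04696 — 2 statements merged into one kernel-verified Lean document; each statement's English description precedes it below -/
import Mathlib

section
/- If a proper metric measure space (X,d,μ) with μ positive and finite on nonempty bounded open sets satisfies, for all compactly supported Lipschitz u and some constants C>0, 1<p<n, p<q≤p(n-1)/(n-p), r=p(q-1)/(p-1), θ=(q-p)n/((q-1)(np-(n-p)q)), the Gagliardo-Nirenberg inequality (∫|u|^r dμ)^{1/r} ≤ C(∫|Du|^p dμ)^{θ/p}(∫|u|^q dμ)^{(1-θ)/q}, where |Du|(x) is the local Lipschitz constant, then (X,d) is unbounded. -/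
/-!
If `X` were bounded it would be compact, so the constant function `1` would be an admissible
test function. Its local Lipschitz constant vanishes and `θ > 0`, so the right-hand side of the
Gagliardo–Nirenberg inequality is `0`, while the left-hand side is `μ(X)^{1/r} > 0`.
-/

open MeasureTheory Metric Filter

/-- The local Lipschitz constant `|Du|(x) = limsup_{y→x} |u(y)-u(x)| / d(x,y)`. -/
noncomputable def localLipConst {X : Type*} [MetricSpace X] (u : X → ℝ) (x : X) : ℝ :=
  Filter.limsup (fun y => |u y - u x| / dist x y) (nhdsWithin x {x}ᶜ)

lemma localLipConst_const {X : Type*} [MetricSpace X] (c : ℝ) (x : X) :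
    localLipConst (fun _ => c) x = 0 := by
  unfold localLipConst
  simp only [sub_self, abs_zero, zero_div]
  rcases (nhdsWithin x {x}ᶜ).eq_or_neBot with h | h
  · -- at an isolated point the filter is `⊥` and `limsup` is `sInf univ = 0` by the junk value
    rw [h, Filter.limsup_eq, Real.sInf_of_not_bddBelow (by simp)]
  · exact limsup_const 0

lemma integral_localLipConst_const_rpow {X : Type*} [MetricSpace X] [MeasurableSpace X]
    (μ : Measure X) (c : ℝ) {p : ℝ} (hp : p ≠ 0) :
    ∫ x, localLipConst (fun _ => c) x ^ p ∂μ = 0 := by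
  simp [localLipConst_const, Real.zero_rpow hp]

lemma gagliardoNirenberg_exponent_pos {n p q : ℝ} (hp1 : 1 < p) (hpn : p < n) (hpq : p < q)
    (hqle : q ≤ p * (n - 1) / (n - p)) :
    0 < (q - p) * n / ((q - 1) * (n * p - (n - p) * q)) := by
  have hnp : 0 < n - p := by linarith
  have hden : 0 < n * p - (n - p) * q := by
    have := (le_div_iff₀ hnp).mp hqle
    nlinarith
  exact div_pos (by nlinarith) (by nlinarith)

theorem GN_inequality_implies_unbounded_general (X : Type*) [MetricSpace X] [ProperSpace X]
    [Nonempty X] [MeasurableSpace X] (μ : Measure X)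
    (hμ : ∀ U : Set X, IsOpen U → U.Nonempty → Bornology.IsBounded U → 0 < μ U ∧ μ U < ⊤)
    (n p q r θ C : ℝ) (hp1 : 1 < p) (hpn : p < n)
    (hpq : p < q) (hqle : q ≤ p * (n - 1) / (n - p))
    (hθ : θ = (q - p) * n / ((q - 1) * (n * p - (n - p) * q)))
    (hGN : ∀ u : X → ℝ, (∃ K : NNReal, LipschitzWith K u) → HasCompactSupport u →
      (∫ x, |u x| ^ r ∂μ) ^ (1 / r) ≤
        C * (∫ x, localLipConst u x ^ p ∂μ) ^ (θ / p) *
          (∫ x, |u x| ^ q ∂μ) ^ ((1 - θ) / q)) :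
    ¬ Bornology.IsBounded (Set.univ : Set X) := by
  intro hb
  have hθp : θ / p ≠ 0 :=
    (div_pos (hθ ▸ gagliardoNirenberg_exponent_pos hp1 hpn hpq hqle) (by linarith)).ne'
  obtain ⟨hμ0, hμfin⟩ := hμ Set.univ isOpen_univ Set.univ_nonempty hb
  have hcompact : IsCompact (Set.univ : Set X) := isCompact_of_isClosed_isBounded isClosed_univ hb
  have hGN1 := hGN (fun _ => 1) ⟨0, LipschitzWith.const 1⟩
    (HasCompactSupport.of_support_subset_isCompact hcompact (Set.subset_univ _))
  rw [integral_localLipConst_const_rpow μ 1 (by linarith), Real.zero_rpow hθp, mul_zero,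
    zero_mul] at hGN1
  simp only [abs_one, Real.one_rpow, integral_const, smul_eq_mul, mul_one] at hGN1
  have hμpos : 0 < μ.real Set.univ ^ (1 / r) :=
    Real.rpow_pos_of_pos (ENNReal.toReal_pos hμ0.ne' hμfin.ne) _
  exact hμpos.not_ge hGN1

theorem GN_inequality_implies_unbounded (X : Type*) [MetricSpace X] [ProperSpace X]
    [Nonempty X] [MeasurableSpace X] [BorelSpace X] (μ : Measure X)
    (hμ : ∀ U : Set X, IsOpen U → U.Nonempty → Bornology.IsBounded U → 0 < μ U ∧ μ U < ⊤)
    (n p q r θ C : ℝ) (hn : 2 ≤ n) (hp1 : 1 < p) (hpn : p < n)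
    (hpq : p < q) (hqle : q ≤ p * (n - 1) / (n - p))
    (hr : r = p * (q - 1) / (p - 1))
    (hθ : θ = (q - p) * n / ((q - 1) * (n * p - (n - p) * q)))
    (hC : 0 < C)
    (hGN : ∀ u : X → ℝ, (∃ K : NNReal, LipschitzWith K u) → HasCompactSupport u →
      (∫ x, |u x| ^ r ∂μ) ^ (1 / r) ≤
        C * (∫ x, localLipConst u x ^ p ∂μ) ^ (θ / p) *
          (∫ x, |u x| ^ q ∂μ) ^ ((1 - θ) / q)) :
    ¬ Bornology.IsBounded (Set.univ : Set X) :=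
  GN_inequality_implies_unbounded_general X μ hμ n p q r θ C hp1 hpn hpq hqle hθ hGN
end

section
/- Let F, H₀ : (0,∞)→ℝ be C¹ functions with F>0, H₀>0, and suppose there are constants l>0, α>0, β>0, γ≥0 such that (-F'(λ))^α ≤ l(F(λ)+βλF'(λ))F(λ)^γ for all λ>0, while H₀ satisfies the corresponding equality (-H₀'(λ))^α = l(H₀(λ)+βλH₀'(λ))H₀(λ)^γ with H₀ decreasing. If liminf_{λ→0} F(λ)/H₀(λ) > 1, then F(λ) ≥ H₀(λ) for all λ>0. -/
open Filter Set

lemma key_ineq {l α β γ x u v a b : ℝ} (hl : 0 < l) (hα : 0 < α) (hβ : 0 < β)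
    (hγ : 0 ≤ γ) (hx : 0 < x)
    (hu : 0 < u) (huv : u ≤ v) (ha : a ≤ 0) (hb : b ≤ 0)
    (hA : (-a) ^ α ≤ l * (u + β * x * a) * u ^ γ)
    (hB : (-b) ^ α = l * (v + β * x * b) * v ^ γ) : b ≤ a := by
  by_contra h
  push_neg at h
  have hv : 0 < v := lt_of_lt_of_le hu huv
  have hP : (0:ℝ) < u ^ γ := Real.rpow_pos_of_pos hu γ
  have hQ : (0:ℝ) < v ^ γ := Real.rpow_pos_of_pos hv γ
  have hPQ : u ^ γ ≤ v ^ γ := Real.rpow_le_rpow hu.le huv hγ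
  have hBA : (-b) ^ α < (-a) ^ α := Real.rpow_lt_rpow (by linarith) (by linarith) hα
  have h1 : 0 ≤ v + β * x * b := by
    have h0 : (0:ℝ) ≤ (-b) ^ α := Real.rpow_nonneg (by linarith) α
    nlinarith [mul_pos hl hQ, h0, hB]
  have hc : 0 < β * x := mul_pos hβ hx
  nlinarith [mul_le_mul_of_nonneg_left hPQ h1, hA, hB, hBA, hP,
    mul_nonneg (mul_pos hl hP).le (sub_nonneg.2 huv),
    mul_nonneg (mul_pos hl hP).le (mul_nonneg hc.le (sub_nonneg.2 h.le)),
    mul_pos hl hP]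

theorem ode_comparison (F F' H₀ H₀' : ℝ → ℝ) (l α β γ : ℝ)
    (hl : 0 < l) (hα : 0 < α) (hβ : 0 < β) (hγ : 0 ≤ γ)
    (hFderiv : ∀ lam : ℝ, 0 < lam → HasDerivAt F (F' lam) lam)
    (hF'cont : ContinuousOn F' (Ioi 0))
    (hHderiv : ∀ lam : ℝ, 0 < lam → HasDerivAt H₀ (H₀' lam) lam)
    (hH'cont : ContinuousOn H₀' (Ioi 0))
    (hFpos : ∀ lam : ℝ, 0 < lam → 0 < F lam)
    (hHpos : ∀ lam : ℝ, 0 < lam → 0 < H₀ lam)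
    (hF'nonpos : ∀ lam : ℝ, 0 < lam → F' lam ≤ 0)
    (hH'nonpos : ∀ lam : ℝ, 0 < lam → H₀' lam ≤ 0)
    (hFineq : ∀ lam : ℝ, 0 < lam →
      (-F' lam) ^ α ≤ l * (F lam + β * lam * F' lam) * F lam ^ γ)
    (hHeq : ∀ lam : ℝ, 0 < lam →
      (-H₀' lam) ^ α = l * (H₀ lam + β * lam * H₀' lam) * H₀ lam ^ γ)
    (hHanti : AntitoneOn H₀ (Ioi 0))
    (hliminf : 1 < Filter.liminf (fun lam => F lam / H₀ lam) (nhdsWithin 0 (Ioi 0))) :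
    ∀ lam : ℝ, 0 < lam → H₀ lam ≤ F lam := by
  -- Step 1: extract eventual F > H₀ near 0
  have hbdd : Filter.IsBoundedUnder (· ≥ ·) (nhdsWithin 0 (Ioi 0))
      (fun lam => F lam / H₀ lam) := by
    refine ⟨0, eventually_map.2 ?_⟩
    filter_upwards [self_mem_nhdsWithin] with x hx
    exact div_nonneg (hFpos x hx).le (hHpos x hx).le
  have hev : ∀ᶠ lam in nhdsWithin 0 (Ioi 0), 1 < F lam / H₀ lam :=
    Filter.eventually_lt_of_lt_liminf hliminf hbdd
  rw [eventually_nhdsWithin_iff, Metric.eventually_nhds_iff] at hev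
  obtain ⟨ε, hε, hevε⟩ := hev
  have hsmall : ∀ t : ℝ, 0 < t → t < ε → H₀ t < F t := by
    intro t ht htε
    have hd : dist t 0 < ε := by
      rw [Real.dist_eq, sub_zero, abs_of_pos ht]; exact htε
    have := hevε hd ht
    exact (one_lt_div (hHpos t ht)).mp this
  intro lam hlam
  by_contra hcon
  push_neg at hcon
  rcases lt_or_ge lam ε with hcase | hcase
  · exact absurd (hsmall lam hlam hcase) (not_lt.2 hcon.le)
  set lam0 : ℝ := ε / 2 with hlam0def
  have hlam0pos : 0 < lam0 := by positivity
  have hlam0lt : lam0 < lam := by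
    have : lam0 < ε := by simp [hlam0def]; linarith
    linarith
  set w : ℝ → ℝ := fun t => H₀ t - F t with hwdef
  have hwderiv : ∀ t : ℝ, 0 < t → HasDerivAt w (H₀' t - F' t) t :=
    fun t ht => (hHderiv t ht).sub (hFderiv t ht)
  have hwcont : ContinuousOn w (Icc lam0 lam) := fun t ht =>
    ((hwderiv t (lt_of_lt_of_le hlam0pos ht.1)).continuousAt).continuousWithinAt
  set K : Set ℝ := Icc lam0 lam ∩ w ⁻¹' (Iic 0) with hKdef
  have hKclosed : IsClosed K :=
    hwcont.preimage_isClosed_of_isClosed isClosed_Icc isClosed_Iic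
  have hlam0K : lam0 ∈ K := by
    constructor
    · exact ⟨le_refl _, hlam0lt.le⟩
    · have := hsmall lam0 hlam0pos (by simp [hlam0def]; linarith)
      simp only [mem_preimage, mem_Iic, hwdef]
      linarith
  have hKbdd : BddAbove K := ⟨lam, fun t ht => ht.1.2⟩
  set s : ℝ := sSup K with hsdef
  have hsK : s ∈ K := hKclosed.csSup_mem ⟨lam0, hlam0K⟩ hKbdd
  have hwlam : 0 < w lam := by simp only [hwdef]; linarith
  have hslam : s < lam := by
    rcases lt_or_eq_of_le hsK.1.2 with h | h
    · exact h
    · exfalso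
      have := hsK.2
      rw [h] at this
      simp only [mem_preimage, mem_Iic] at this
      linarith
  have hspos : 0 < s := lt_of_lt_of_le hlam0pos hsK.1.1
  have hpos_on : ∀ t ∈ Ioc s lam, 0 < w t := by
    intro t ht
    by_contra hneg
    push_neg at hneg
    have htK : t ∈ K := ⟨⟨le_trans hsK.1.1 ht.1.le, ht.2⟩, hneg⟩
    exact absurd (le_csSup hKbdd htK) (not_le.2 ht.1)
  have hanti : AntitoneOn w (Icc s lam) := by
    apply antitoneOn_of_deriv_nonpos (convex_Icc s lam)
      (hwcont.mono (Icc_subset_Icc_left hsK.1.1))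
    · intro x hx
      rw [interior_Icc] at hx
      exact ((hwderiv x (lt_trans hspos hx.1)).differentiableAt).differentiableWithinAt
    · intro x hx
      rw [interior_Icc] at hx
      have hx0 : 0 < x := lt_trans hspos hx.1
      rw [(hwderiv x hx0).deriv]
      have hwx : 0 < w x := hpos_on x ⟨hx.1, hx.2.le⟩
      have hFH : F x ≤ H₀ x := by simp only [hwdef] at hwx; linarith
      have hkey : H₀' x ≤ F' x :=
        key_ineq hl hα hβ hγ hx0 (hFpos x hx0) hFH (hF'nonpos x hx0)
          (hH'nonpos x hx0) (hFineq x hx0) (hHeq x hx0)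
      linarith
  have hfinal : w lam ≤ w s :=
    hanti ⟨le_refl s, hslam.le⟩ ⟨hslam.le, le_refl lam⟩ hslam.le
  have hws : w s ≤ 0 := hsK.2
  linarith
end
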